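/- Let n ≥ 1, let 0 < p < 1, and let (a_k)_{k=1}^n and (b_k)_{k=1}^n be non-negative non-increasing sequences of real numbers. Then (∑_{k=1}^n (-1)^{k+1} (a_k + b_k)^p)^{1/p} ≤ 2^{1/p − 1} · ((∑_{k=1}^n (-1)^{k+1} a_k^p)^{1/p} + (∑_{k=1}^n (-1)^{k+1} b_k^p)^{1/p}). -/

import Mathlib

/-!
Because `x ↦ x ^ p` is concave on `[0, ∞)`, the defect `s ^ p + t ^ p - (s + t) ^ p` is
non-negative and non-decreasing in each of `s, t ≥ 0`. Hence `a_k ^ p + b_k ^ p - (a_k + b_k) ^ p`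
is again non-negative and non-increasing, so its alternating sum is non-negative: the alternating
sum for `a + b` is at most the sum of those for `a` and `b`. Raising to the power `1 / p ≥ 1` and
applying the power-mean bound `(A + B) ^ q ≤ 2 ^ (q - 1) * (A ^ q + B ^ q)` gives the constant.
-/

open Finset

theorem ConcaveOn.map_add_sub_map_le {s : Set ℝ} {f : ℝ → ℝ} (hf : ConcaveOn ℝ s f)
    {x y d : ℝ} (hx : x ∈ s) (hyd : y + d ∈ s) (hxy : x ≤ y) (hd : 0 ≤ d) :
    f (y + d) - f y ≤ f (x + d) - f x := by
  rcases hd.eq_or_lt with rfl | hd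
  · simp
  have hD : 0 < y + d - x := by linarith
  set l := d / (y + d - x)
  set m := (y - x) / (y + d - x)
  have hl : 0 ≤ l := by positivity
  have hm : 0 ≤ m := div_nonneg (by linarith) hD.le
  have hlm : l + m = 1 := by rw [← add_div, div_eq_one_iff_eq hD.ne']; ring
  -- `x + d` and `y` are the two convex combinations of `x` and `y + d` with swapped weights.
  have hxd : l • (y + d) + m • x = x + d := by simp only [smul_eq_mul, l, m]; field_simp; ring
  have hy : m • (y + d) + l • x = y := by simp only [smul_eq_mul, l, m]; field_simp; ring
  have h₁ := hf.2 hyd hx hl hm hlm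
  have h₂ := hf.2 hyd hx hm hl (by rw [add_comm, hlm])
  rw [hxd] at h₁
  rw [hy] at h₂
  simp only [smul_eq_mul] at h₁ h₂
  linear_combination h₁ + h₂ - (f (y + d) + f x) * hlm

theorem ConcaveOn.map_add_map_sub_map_add_le {f : ℝ → ℝ} (hf : ConcaveOn ℝ (Set.Ici 0) f)
    {s s' t t' : ℝ} (hs' : 0 ≤ s') (ht' : 0 ≤ t') (hs : s' ≤ s) (ht : t' ≤ t) :
    f s' + f t' - f (s' + t') ≤ f s + f t - f (s + t) := by
  have hS := hf.map_add_sub_map_le (x := s') (y := s' + t') (d := s - s')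
    hs' (by simp only [Set.mem_Ici]; linarith) (by linarith) (by linarith)
  have hT := hf.map_add_sub_map_le (x := t') (y := t' + s) (d := t - t')
    ht' (by simp only [Set.mem_Ici]; linarith) (by linarith) (by linarith)
  rw [show s' + t' + (s - s') = s + t' by ring, show s' + (s - s') = s by ring] at hS
  rw [show t' + s + (t - t') = s + t by ring, show t' + (t - t') = t by ring,
    add_comm t' s] at hT
  linarith

theorem Real.rpow_add_le_two_rpow_mul_rpow_add_rpow {x y q : ℝ} (hx : 0 ≤ x) (hy : 0 ≤ y)
    (hq : 1 ≤ q) : (x + y) ^ q ≤ 2 ^ (q - 1) * (x ^ q + y ^ q) := by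
  lift x to NNReal using hx
  lift y to NNReal using hy
  exact_mod_cast NNReal.rpow_add_le_mul_rpow_add_rpow x y hq

section AlternatingSum

variable {R : Type*}

theorem alternating_sum_range_succ_mem_Icc [Ring R] [PartialOrder R] [IsOrderedRing R]
    (c : ℕ → R) (n : ℕ) (hc : ∀ i ≤ n, 0 ≤ c i) (hanti : ∀ i < n, c (i + 1) ≤ c i) :
    ∑ i ∈ range (n + 1), (-1) ^ i * c i ∈ Set.Icc 0 (c 0) := by
  induction n generalizing c with
  | zero => simpa using hc 0 le_rfl
  | succ n ih =>
    obtain ⟨htail_nonneg, htail_le⟩ :=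
      ih (fun i => c (i + 1)) (fun i hi => hc _ (by omega)) (fun i hi => hanti _ (by omega))
    have hc₁ : c 1 ≤ c 0 := hanti 0 (by omega)
    rw [sum_range_succ']
    simp only [pow_succ, mul_neg_one, neg_mul, sum_neg_distrib, pow_zero, one_mul, neg_add_eq_sub]
    rw [zero_add] at htail_le
    exact ⟨sub_nonneg.2 (htail_le.trans hc₁), sub_le_self _ htail_nonneg⟩

def altSum [Ring R] (n : ℕ) (c : ℕ → R) : R :=
  ∑ k ∈ Icc 1 n, (-1) ^ (k + 1) * c k

theorem altSum_eq_sum_range [Ring R] (n : ℕ) (c : ℕ → R) :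
    altSum n c = ∑ i ∈ range n, (-1) ^ i * c (i + 1) := by
  rw [altSum, ← Ico_add_one_right_eq_Icc, sum_Ico_eq_sum_range, add_tsub_cancel_right]
  refine sum_congr rfl fun i _ => ?_
  rw [add_comm 1 i, pow_succ, pow_succ, mul_neg_one, mul_neg_one, neg_neg]

structure IsNonnegAntitone [Zero R] [LE R] (n : ℕ) (c : ℕ → R) : Prop where
  nonneg : ∀ k, 1 ≤ k → k ≤ n → 0 ≤ c k
  antitone : ∀ k, 1 ≤ k → k < n → c (k + 1) ≤ c k

namespace IsNonnegAntitone

variable {n : ℕ}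

theorem altSum_nonneg [Ring R] [PartialOrder R] [IsOrderedRing R] {c : ℕ → R}
    (hc : IsNonnegAntitone n c) : 0 ≤ altSum n c := by
  rw [altSum_eq_sum_range]
  cases n with
  | zero => simp
  | succ n =>
    exact (alternating_sum_range_succ_mem_Icc (fun i => c (i + 1)) n
      (fun i hi => hc.nonneg _ (by omega) (by omega))
      (fun i hi => hc.antitone _ (by omega) (by omega))).1

theorem add [AddCommMonoid R] [PartialOrder R] [IsOrderedAddMonoid R] {a b : ℕ → R}
    (ha : IsNonnegAntitone n a) (hb : IsNonnegAntitone n b) :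
    IsNonnegAntitone n (fun k => a k + b k) where
  nonneg k h₁ h₂ := add_nonneg (ha.nonneg k h₁ h₂) (hb.nonneg k h₁ h₂)
  antitone k h₁ h₂ := add_le_add (ha.antitone k h₁ h₂) (hb.antitone k h₁ h₂)

theorem rpow {a : ℕ → ℝ} (ha : IsNonnegAntitone n a) {p : ℝ} (hp : 0 ≤ p) :
    IsNonnegAntitone n (fun k => a k ^ p) where
  nonneg k h₁ h₂ := Real.rpow_nonneg (ha.nonneg k h₁ h₂) p
  antitone k h₁ h₂ :=
    Real.rpow_le_rpow (ha.nonneg (k + 1) (by omega) (by omega)) (ha.antitone k h₁ h₂) hp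

theorem concave_defect {a b : ℕ → ℝ} (ha : IsNonnegAntitone n a) (hb : IsNonnegAntitone n b)
    {f : ℝ → ℝ} (hf : ConcaveOn ℝ (Set.Ici 0) f) (hf₀ : 0 ≤ f 0) :
    IsNonnegAntitone n (fun k => f (a k) + f (b k) - f (a k + b k)) where
  nonneg k h₁ h₂ := by
    have hdefect :=
      hf.map_add_map_sub_map_add_le le_rfl le_rfl (ha.nonneg k h₁ h₂) (hb.nonneg k h₁ h₂)
    rw [add_zero, add_sub_cancel_right] at hdefect
    exact hf₀.trans hdefect
  antitone k h₁ h₂ :=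
    hf.map_add_map_sub_map_add_le (ha.nonneg (k + 1) (by omega) (by omega))
      (hb.nonneg (k + 1) (by omega) (by omega)) (ha.antitone k h₁ h₂) (hb.antitone k h₁ h₂)

end IsNonnegAntitone

end AlternatingSum

theorem altSum_rpow_add_le {n : ℕ} {a b : ℕ → ℝ} (ha : IsNonnegAntitone n a)
    (hb : IsNonnegAntitone n b) {p : ℝ} (hp₀ : 0 ≤ p) (hp₁ : p ≤ 1) :
    altSum n (fun k => (a k + b k) ^ p) ≤
      altSum n (fun k => a k ^ p) + altSum n (fun k => b k ^ p) := by
  have hdefect := (ha.concave_defect hb (Real.concaveOn_rpow hp₀ hp₁)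
    (Real.rpow_nonneg le_rfl p)).altSum_nonneg
  rw [← sub_nonneg]
  refine hdefect.trans_eq ?_
  simp only [altSum, ← sum_add_distrib, ← sum_sub_distrib, mul_sub, mul_add]

theorem alternating_minkowski_lt_one_general (n : ℕ) (p : ℝ) (hp0 : 0 < p)
    (hp1 : p < 1) (a b : ℕ → ℝ)
    (ha_nonneg : ∀ k, 1 ≤ k → k ≤ n → 0 ≤ a k)
    (hb_nonneg : ∀ k, 1 ≤ k → k ≤ n → 0 ≤ b k)
    (ha_mono : ∀ k, 1 ≤ k → k < n → a (k + 1) ≤ a k)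
    (hb_mono : ∀ k, 1 ≤ k → k < n → b (k + 1) ≤ b k) :
    (∑ k ∈ Finset.Icc 1 n, (-1 : ℝ) ^ (k + 1) * (a k + b k) ^ p) ^ (1 / p) ≤
    (2 : ℝ) ^ (1 / p - 1) *
      ((∑ k ∈ Finset.Icc 1 n, (-1 : ℝ) ^ (k + 1) * a k ^ p) ^ (1 / p) +
        (∑ k ∈ Finset.Icc 1 n, (-1 : ℝ) ^ (k + 1) * b k ^ p) ^ (1 / p)) := by
  have ha : IsNonnegAntitone n a := ⟨ha_nonneg, ha_mono⟩
  have hb : IsNonnegAntitone n b := ⟨hb_nonneg, hb_mono⟩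
  calc altSum n (fun k => (a k + b k) ^ p) ^ (1 / p)
      ≤ (altSum n (fun k => a k ^ p) + altSum n (fun k => b k ^ p)) ^ (1 / p) :=
        Real.rpow_le_rpow ((ha.add hb).rpow hp0.le).altSum_nonneg
          (altSum_rpow_add_le ha hb hp0.le hp1.le) (one_div_nonneg.2 hp0.le)
    _ ≤ 2 ^ (1 / p - 1) * (altSum n (fun k => a k ^ p) ^ (1 / p) +
          altSum n (fun k => b k ^ p) ^ (1 / p)) :=
        Real.rpow_add_le_two_rpow_mul_rpow_add_rpow (ha.rpow hp0.le).altSum_nonneg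
          (hb.rpow hp0.le).altSum_nonneg (one_le_one_div hp0 hp1.le)

/-- Theorem 2 for `0 < p < 1`: reversed Minkowski-type inequality with alternating
signs, with the sharp constant `2^(1/p - 1)`. -/
theorem alternating_minkowski_lt_one (n : ℕ) (hn : 1 ≤ n) (p : ℝ) (hp0 : 0 < p)
    (hp1 : p < 1) (a b : ℕ → ℝ)
    (ha_nonneg : ∀ k, 1 ≤ k → k ≤ n → 0 ≤ a k)
    (hb_nonneg : ∀ k, 1 ≤ k → k ≤ n → 0 ≤ b k)
    (ha_mono : ∀ k, 1 ≤ k → k < n → a (k + 1) ≤ a k)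
    (hb_mono : ∀ k, 1 ≤ k → k < n → b (k + 1) ≤ b k) :
    (∑ k ∈ Finset.Icc 1 n, (-1 : ℝ) ^ (k + 1) * (a k + b k) ^ p) ^ (1 / p) ≤
    (2 : ℝ) ^ (1 / p - 1) *
      ((∑ k ∈ Finset.Icc 1 n, (-1 : ℝ) ^ (k + 1) * a k ^ p) ^ (1 / p) +
        (∑ k ∈ Finset.Icc 1 n, (-1 : ℝ) ^ (k + 1) * b k ^ p) ^ (1 / p)) :=
  alternating_minkowski_lt_one_general n p hp0 hp1 a b ha_nonneg hb_nonneg ha_mono hb_mono
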